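/- Let n ≥ 3 and let u ∈ W^{2,2}(ℝⁿ) be a nontrivial solution of |Δu| ≤ |Vu| with supp u ⊂ B(a,r). If 1_{B(a,r)} V belongs to the extended Kato class K̃_n, then there exists r₀ > 0 such that for all r < r₀, η(2r, V) ≥ C > 0 with a constant C independent of r. -/

import Mathlib

/-!
Let `x₀` be a point where `|u|` attains its maximum `M > 0`, and test `Δu` against the regularized
Newton kernel `φ_ε(y) = (|y - x₀|² + ε²)^((2 - n)/2)`. Since `φ_ε(y) ≤ |y - x₀|^(2 - n)` and
`supp u ⊆ B(a, r) ⊆ B(x₀, 2r)`, the inequality `|Δu| ≤ |V| M` gives `|∫ φ_ε Δu| ≤ η(2r, V) M`.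
On the other hand `-Δφ_ε(y) = ε⁻ⁿ K((x₀ - y)/ε)` with `K(w) = n(n - 2)(1 + |w|²)^(-(n + 2)/2)`
positive and integrable, so by Green's formula `∫ φ_ε Δu → -(∫ K) u(x₀)` as `ε → 0`.
Hence `(∫ K) M ≤ η(2r, V) M`, i.e. `η(2r, V) ≥ ∫ K` for every `r`.
-/

open MeasureTheory Metric Filter Set
open scoped ENNReal NNReal Topology

noncomputable section

abbrev Eu (n : ℕ) := EuclideanSpace ℝ (Fin n)

def lap {n : ℕ} (u : Eu n → ℂ) (x : Eu n) : ℂ :=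
  ∑ j, iteratedFDeriv ℝ 2 u x ![EuclideanSpace.single j 1, EuclideanSpace.single j 1]

def MemW22 {n : ℕ} (u : Eu n → ℂ) : Prop :=
  ContDiff ℝ 2 u ∧ MemLp u 2 volume ∧ MemLp (fun x => fderiv ℝ u x) 2 volume ∧
    MemLp (fun x => iteratedFDeriv ℝ 2 u x) 2 volume

def eta (n : ℕ) (r : ℝ) (V : Eu n → ℝ) : ℝ≥0∞ :=
  ⨆ x : Eu n, ∫⁻ y in ball x r, (‖V y‖₊ : ℝ≥0∞) / edist x y ^ (n - 2)

open scoped RealInnerProductSpace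

section IntegrationByParts

variable {E F : Type*} [NormedAddCommGroup E] [NormedSpace ℝ E] [FiniteDimensional ℝ E]
  [MeasurableSpace E] [BorelSpace E] {μ : Measure E} [μ.IsAddHaarMeasure]
  [NormedAddCommGroup F] [NormedSpace ℝ F] {f f' f'' : E → ℝ} {v : E}

theorem integral_smul_eq_neg_of_hasLineDerivAt_of_hasCompactSupport {g g' : E → F}
    (hf : Continuous f) (hf' : Continuous f') (hg : Continuous g) (hg' : Continuous g')
    (hgs : HasCompactSupport g) (hg's : HasCompactSupport g')
    (hfd : ∀ x, HasLineDerivAt ℝ f (f' x) x v) (hgd : ∀ x, HasLineDerivAt ℝ g (g' x) x v) :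
    ∫ x, f x • g' x ∂μ = -∫ x, f' x • g x ∂μ :=
  integral_bilinear_hasLineDerivAt_right_eq_neg_left_of_integrable
    (B := ContinuousLinearMap.lsmul ℝ ℝ)
    ((hf'.smul hg).integrable_of_hasCompactSupport hgs.smul_left)
    ((hf.smul hg').integrable_of_hasCompactSupport hg's.smul_left)
    ((hf.smul hg).integrable_of_hasCompactSupport hgs.smul_left)
    (fun x _ ↦ hfd x) (fun x _ ↦ hgd x)

theorem integral_smul_fderiv_fderiv_eq_of_hasCompactSupport {u : E → F}
    (hu : ContDiff ℝ 2 u) (hus : HasCompactSupport u)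
    (hf : Continuous f) (hf' : Continuous f') (hf'' : Continuous f'')
    (hfd : ∀ x, HasLineDerivAt ℝ f (f' x) x v) (hf'd : ∀ x, HasLineDerivAt ℝ f' (f'' x) x v) :
    ∫ x, f x • fderiv ℝ (fderiv ℝ u) x v v ∂μ = ∫ x, f'' x • u x ∂μ := by
  have hDu : ContDiff ℝ 1 (fderiv ℝ u) := hu.fderiv_right (by norm_num)
  have hDus : HasCompactSupport (fderiv ℝ u · v) := hus.fderiv_apply ℝ v
  have hD2us : HasCompactSupport (fderiv ℝ (fderiv ℝ u) · v v) :=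
    ((hus.fderiv ℝ).fderiv_apply ℝ v).comp_left (g := fun L : E →L[ℝ] F ↦ L v) rfl
  rw [integral_smul_eq_neg_of_hasLineDerivAt_of_hasCompactSupport hf hf'
      (hDu.continuous.clm_apply continuous_const)
      ((hDu.continuous_fderiv one_ne_zero).clm_apply continuous_const |>.clm_apply continuous_const)
      hDus hD2us hfd
      (fun x ↦ by simpa using ((hDu.differentiable one_ne_zero x).hasFDerivAt.clm_apply
        (hasFDerivAt_const v x)).hasLineDerivAt v),
    integral_smul_eq_neg_of_hasLineDerivAt_of_hasCompactSupport hf' hf'' hu.continuous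
      (hDu.continuous.clm_apply continuous_const) hus hDus hf'd
      (fun x ↦ ((hu.differentiable (by norm_num) x).hasFDerivAt).hasLineDerivAt v),
    neg_neg]

end IntegrationByParts

section RegDistSq

variable {E : Type*} [NormedAddCommGroup E] {c : E} {ε : ℝ}

def regDistSq (c : E) (ε : ℝ) (y : E) : ℝ := ‖y - c‖ ^ 2 + ε ^ 2

lemma regDistSq_pos (hε : ε ≠ 0) (y : E) : 0 < regDistSq c ε y := by
  unfold regDistSq; positivity

@[fun_prop]
lemma continuous_regDistSq : Continuous (regDistSq c ε) := by
  unfold regDistSq; fun_prop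

lemma continuous_regDistSq_rpow (hε : ε ≠ 0) (p : ℝ) : Continuous fun y ↦ regDistSq c ε y ^ p :=
  continuous_regDistSq.rpow_const fun y ↦ Or.inl (regDistSq_pos hε y).ne'

variable [InnerProductSpace ℝ E]

lemma hasFDerivAt_regDistSq (y : E) :
    HasFDerivAt (regDistSq c ε) (2 • innerSL ℝ (y - c)) y :=
  (((hasFDerivAt_id y).sub_const c).norm_sq.add_const (ε ^ 2)).congr_fderiv (by simp)

lemma hasLineDerivAt_regDistSq_rpow (hε : ε ≠ 0) (p : ℝ) (y v : E) :
    HasLineDerivAt ℝ (fun y ↦ regDistSq c ε y ^ p)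
      (2 * p * (regDistSq c ε y ^ (p - 1) * ⟪v, y - c⟫)) y v := by
  convert ((hasFDerivAt_regDistSq (c := c) y).rpow_const (p := p)
    (Or.inl (regDistSq_pos hε y).ne')).hasLineDerivAt v using 1
  simp [inner_sub_right, real_inner_comm]
  ring

lemma hasLineDerivAt_regDistSq_rpow_mul_inner (hε : ε ≠ 0) (p : ℝ) (y v : E) :
    HasLineDerivAt ℝ (fun y ↦ 2 * p * (regDistSq c ε y ^ (p - 1) * ⟪v, y - c⟫))
      (2 * p * (2 * (p - 1) * regDistSq c ε y ^ (p - 2) * ⟪v, y - c⟫ ^ 2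
        + regDistSq c ε y ^ (p - 1) * ‖v‖ ^ 2)) y v := by
  have hq := (hasFDerivAt_regDistSq (c := c) y).rpow_const (p := p - 1)
    (Or.inl (regDistSq_pos hε y).ne')
  have hi := (innerSL ℝ v).hasFDerivAt.comp y ((hasFDerivAt_id y).sub_const c)
  convert (((hq.mul hi).const_mul (2 * p)).hasLineDerivAt v) using 1
  · ext z; simp
  · simp [inner_sub_right, real_inner_comm v, sub_sub, one_add_one_eq_two]
    ring

end RegDistSq

lemma lap_eq_zero_of_notMem_tsupport {n : ℕ} {u : Eu n → ℂ} {y : Eu n} (hy : y ∉ tsupport u) :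
    lap u y = 0 := by
  simp [lap, image_eq_zero_of_notMem_tsupport fun h ↦ hy (tsupport_iteratedFDeriv_subset 2 h)]

lemma lap_eq_sum_fderiv_fderiv {n : ℕ} (u : Eu n → ℂ) (y : Eu n) :
    lap u y = ∑ j, fderiv ℝ (fderiv ℝ u) y (EuclideanSpace.single j 1)
      (EuclideanSpace.single j 1) := by
  simp [lap, iteratedFDeriv_two_apply]

theorem integral_regDistSq_rpow_smul_lap {n : ℕ} {u : Eu n → ℂ} (hu : ContDiff ℝ 2 u)
    (hus : HasCompactSupport u) (c : Eu n) {ε : ℝ} (hε : ε ≠ 0) (p : ℝ) :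
    ∫ y, regDistSq c ε y ^ p • lap u y =
      ∫ y, (2 * p * (2 * (p - 1) * regDistSq c ε y ^ (p - 2) * ‖y - c‖ ^ 2
        + n * regDistSq c ε y ^ (p - 1))) • u y := by
  set e : Fin n → Eu n := fun j ↦ EuclideanSpace.single j 1
  have hint {g : Eu n → ℝ} {w : Eu n → ℂ} (hg : Continuous g) (hw : Continuous w)
      (hws : HasCompactSupport w) : Integrable (fun y ↦ g y • w y) :=
    (hg.smul hw).integrable_of_hasCompactSupport hws.smul_left
  have hDu : ContDiff ℝ 1 (fderiv ℝ u) := hu.fderiv_right (by norm_num)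
  have hD2 (j) : Continuous (fderiv ℝ (fderiv ℝ u) · (e j) (e j)) :=
    ((hDu.continuous_fderiv one_ne_zero).clm_apply continuous_const).clm_apply continuous_const
  have hD2s (j) : HasCompactSupport (fderiv ℝ (fderiv ℝ u) · (e j) (e j)) :=
    ((hus.fderiv ℝ).fderiv_apply ℝ (e j)).comp_left (g := fun L : Eu n →L[ℝ] ℂ ↦ L (e j)) rfl
  have hq (s : ℝ) := continuous_regDistSq_rpow (c := c) hε s
  have hinner (j) : Continuous fun y : Eu n ↦ ⟪e j, y - c⟫ := by fun_prop
  have hf'' (j) : Continuous fun y ↦ 2 * p * (2 * (p - 1) * regDistSq c ε y ^ (p - 2)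
      * ⟪e j, y - c⟫ ^ 2 + regDistSq c ε y ^ (p - 1) * ‖e j‖ ^ 2) := by
    have := hinner j; have := hq (p - 2); have := hq (p - 1); fun_prop
  calc ∫ y, regDistSq c ε y ^ p • lap u y
      = ∑ j, ∫ y, regDistSq c ε y ^ p • fderiv ℝ (fderiv ℝ u) y (e j) (e j) := by
        simp_rw [lap_eq_sum_fderiv_fderiv, Finset.smul_sum]
        exact integral_finsetSum _ fun j _ ↦ hint (hq p) (hD2 j) (hD2s j)
    _ = ∑ j, ∫ y, (2 * p * (2 * (p - 1) * regDistSq c ε y ^ (p - 2) * ⟪e j, y - c⟫ ^ 2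
          + regDistSq c ε y ^ (p - 1) * ‖e j‖ ^ 2)) • u y := by
        refine Finset.sum_congr rfl fun j _ ↦ ?_
        refine integral_smul_fderiv_fderiv_eq_of_hasCompactSupport hu hus (hq p) ?_ (hf'' j)
          (fun y ↦ hasLineDerivAt_regDistSq_rpow hε p y (e j))
          (fun y ↦ hasLineDerivAt_regDistSq_rpow_mul_inner hε p y (e j))
        have := hinner j; have := hq (p - 1); fun_prop
    _ = ∫ y, (2 * p * (2 * (p - 1) * regDistSq c ε y ^ (p - 2) * ‖y - c‖ ^ 2
          + n * regDistSq c ε y ^ (p - 1))) • u y := by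
        rw [← integral_finsetSum _ fun j _ ↦ hint (hf'' j) hu.continuous hus]
        congr with y
        have hsum : ∑ j, ⟪e j, y - c⟫ ^ 2 = ‖y - c‖ ^ 2 := by
          simpa [e] using (EuclideanSpace.basisFun (Fin n) ℝ).sum_sq_inner_right (y - c)
        rw [← Finset.sum_smul, ← Finset.mul_sum, Finset.sum_add_distrib, ← Finset.mul_sum, hsum]
        simp [e]

def regNewtonKernel (n : ℕ) (c : Eu n) (ε : ℝ) (y : Eu n) : ℝ :=
  regDistSq c ε y ^ ((2 - n : ℝ) / 2)

def newtonMollifier (n : ℕ) (w : Eu n) : ℝ :=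
  n * (n - 2) * (1 + ‖w‖ ^ 2) ^ (-(n + 2 : ℝ) / 2)

section NewtonMollifier

variable {n : ℕ}

lemma newtonMollifier_pos (hn : 3 ≤ n) (w : Eu n) : 0 < newtonMollifier n w := by
  have : (3 : ℝ) ≤ n := by exact_mod_cast hn
  unfold newtonMollifier
  exact mul_pos (by nlinarith) (Real.rpow_pos_of_pos (by positivity) _)

lemma integrable_newtonMollifier (n : ℕ) : Integrable (newtonMollifier n) := by
  have hfin : (Module.finrank ℝ (Eu n) : ℝ) < n + 2 := by simp
  exact (integrable_rpow_neg_one_add_norm_sq hfin).const_mul _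

lemma integral_newtonMollifier_pos (hn : 3 ≤ n) : 0 < ∫ w, newtonMollifier n w := by
  have hsupp : Function.support (newtonMollifier n) = univ :=
    eq_univ_of_forall fun w ↦ (newtonMollifier_pos hn w).ne'
  have : NeZero n := ⟨by omega⟩
  rw [integral_pos_iff_support_of_nonneg (fun w ↦ (newtonMollifier_pos hn w).le)
    (integrable_newtonMollifier n), hsupp, Measure.measure_univ_pos]
  exact NeZero.ne _

lemma tendsto_norm_pow_mul_newtonMollifier_cobounded (n : ℕ) :
    Tendsto (fun w : Eu n ↦ ‖w‖ ^ n * newtonMollifier n w) (Bornology.cobounded (Eu n)) (𝓝 0) := by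
  have hdecay : ∀ᶠ w in Bornology.cobounded (Eu n),
      ‖‖w‖ ^ n * newtonMollifier n w‖ ≤ |n * (n - 2 : ℝ)| * (‖w‖ ^ 2)⁻¹ := by
    filter_upwards [Bornology.eventually_ne_cobounded 0] with w hw
    have ht : 0 < ‖w‖ := norm_pos_iff.2 hw
    have hpow : ‖w‖ ^ n * (‖w‖ ^ 2) ^ (-(n + 2 : ℝ) / 2) = (‖w‖ ^ 2)⁻¹ := by
      rw [← Real.rpow_natCast, ← Real.rpow_natCast, ← Real.rpow_mul ht.le, ← Real.rpow_add ht,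
        ← Real.rpow_neg ht.le]
      congr 1; push_cast; ring
    have hle : (1 + ‖w‖ ^ 2) ^ (-(n + 2 : ℝ) / 2) ≤ (‖w‖ ^ 2) ^ (-(n + 2 : ℝ) / 2) :=
      Real.rpow_le_rpow_of_nonpos (by positivity) (by linarith) (by
        have : (0 : ℝ) ≤ n := n.cast_nonneg
        linarith)
    unfold newtonMollifier
    have hR : (0 : ℝ) ≤ (1 + ‖w‖ ^ 2) ^ (-(n + 2 : ℝ) / 2) := by positivity
    rw [Real.norm_eq_abs, abs_mul, abs_mul, abs_of_nonneg (by positivity : (0 : ℝ) ≤ ‖w‖ ^ n),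
      abs_of_nonneg hR, ← hpow, mul_left_comm]
    gcongr
  refine squeeze_zero_norm' hdecay ?_
  have hnorm_sq := (tendsto_pow_atTop two_ne_zero).comp (tendsto_norm_cobounded_atTop (E := Eu n))
  simpa using hnorm_sq.inv_tendsto_atTop.const_mul |n * (n - 2 : ℝ)|

theorem tendsto_integral_newtonMollifier_smul (hn : 3 ≤ n) {u : Eu n → ℂ} (hu : Integrable u)
    {x₀ : Eu n} (hx₀ : ContinuousAt u x₀) :
    Tendsto (fun c : ℝ ↦ ∫ y, (c ^ n * newtonMollifier n (c • (x₀ - y))) • u y) atTop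
      (𝓝 ((∫ w, newtonMollifier n w) • u x₀)) := by
  set A := ∫ w, newtonMollifier n w
  have hA : A ≠ 0 := (integral_newtonMollifier_pos hn).ne'
  have hpeak := tendsto_integral_comp_smul_smul_of_integrable'
    (φ := fun w ↦ A⁻¹ * newtonMollifier n w)
    (fun w ↦ mul_nonneg (inv_nonneg.2 (integral_newtonMollifier_pos hn).le)
      (newtonMollifier_pos hn w).le)
    (by rw [integral_const_mul, inv_mul_cancel₀ hA])
    (by simpa [mul_left_comm] using
      (tendsto_norm_pow_mul_newtonMollifier_cobounded n).const_mul A⁻¹)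
    hu hx₀
  refine (hpeak.const_smul A).congr fun c ↦ ?_
  rw [← integral_smul]
  congr with y
  simp only [finrank_euclideanSpace_fin, smul_smul]
  field_simp

end NewtonMollifier

theorem integral_regNewtonKernel_smul_lap {n : ℕ} {u : Eu n → ℂ} (hu : ContDiff ℝ 2 u)
    (hus : HasCompactSupport u) (c : Eu n) {ε : ℝ} (hε : 0 < ε) :
    ∫ y, regNewtonKernel n c ε y • lap u y =
      -∫ y, (ε⁻¹ ^ n * newtonMollifier n (ε⁻¹ • (c - y))) • u y := by
  rw [← integral_neg]
  refine (integral_regDistSq_rpow_smul_lap hu hus c hε.ne' _).trans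
    (congr_arg _ (funext fun y ↦ ?_))
  rw [← neg_smul]
  congr 1
  have hq := regDistSq_pos (c := c) hε.ne' y
  set q := regDistSq c ε y
  have hs : ‖y - c‖ ^ 2 = q - ε ^ 2 := by simp [q, regDistSq]
  have hscale : 1 + ‖ε⁻¹ • (c - y)‖ ^ 2 = (ε ^ 2)⁻¹ * q := by
    rw [norm_smul, mul_pow, norm_sub_rev, hs, norm_inv, Real.norm_of_nonneg hε.le]
    field_simp
    ring
  have hε_pow : ε⁻¹ ^ n * (ε ^ 2)⁻¹ ^ (-(n + 2 : ℝ) / 2) = ε ^ 2 := by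
    rw [Real.inv_rpow (by positivity), ← Real.rpow_natCast ε 2, ← Real.rpow_mul hε.le,
      ← Real.rpow_neg hε.le, show -((2 : ℕ) * (-(n + 2 : ℝ) / 2)) = n + 2 by push_cast; ring,
      Real.rpow_add hε, Real.rpow_natCast, Real.rpow_natCast, inv_pow,
      inv_mul_cancel_left₀ (pow_ne_zero _ hε.ne')]
    norm_num
  have hexp₁ : (2 - n : ℝ) / 2 - 2 = -(n + 2 : ℝ) / 2 := by ring
  have hexp₂ : (2 - n : ℝ) / 2 - 1 = -(n + 2 : ℝ) / 2 + 1 := by ring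
  unfold newtonMollifier
  rw [hscale, Real.mul_rpow (by positivity) hq.le, hs, hexp₁, hexp₂, Real.rpow_add_one hq.ne',
    show ε⁻¹ ^ n * (n * (n - 2) * ((ε ^ 2)⁻¹ ^ (-(n + 2 : ℝ) / 2) * q ^ (-(n + 2 : ℝ) / 2))) =
      n * (n - 2) * (ε⁻¹ ^ n * (ε ^ 2)⁻¹ ^ (-(n + 2 : ℝ) / 2)) * q ^ (-(n + 2 : ℝ) / 2) by ring,
    hε_pow]
  ring

lemma enorm_regNewtonKernel_le {n : ℕ} (hn : 2 ≤ n) {c y : Eu n} (hy : y ≠ c) (ε : ℝ) :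
    ‖regNewtonKernel n c ε y‖ₑ ≤ (edist c y ^ (n - 2))⁻¹ := by
  have ht : 0 < dist y c := dist_pos.2 hy
  have hexp : (2 - n : ℝ) / 2 ≤ 0 := by
    have : (2 : ℝ) ≤ n := by exact_mod_cast hn
    linarith
  have hle : regNewtonKernel n c ε y ≤ (dist y c ^ 2) ^ ((2 - n : ℝ) / 2) :=
    Real.rpow_le_rpow_of_nonpos (by positivity)
      (by rw [regDistSq, ← dist_eq_norm]; nlinarith) hexp
  have hpow : (dist y c ^ 2) ^ ((2 - n : ℝ) / 2) = (dist y c ^ (n - 2))⁻¹ := by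
    rw [← Real.rpow_natCast, ← Real.rpow_natCast, ← Real.rpow_mul ht.le, ← Real.rpow_neg ht.le,
      Nat.cast_sub hn]
    congr 1; push_cast; ring
  calc ‖regNewtonKernel n c ε y‖ₑ = ENNReal.ofReal (regNewtonKernel n c ε y) :=
        Real.enorm_of_nonneg (Real.rpow_nonneg (by unfold regDistSq; positivity) _)
    _ ≤ ENNReal.ofReal (dist y c ^ (n - 2))⁻¹ := ENNReal.ofReal_le_ofReal (hle.trans_eq hpow)
    _ = (edist c y ^ (n - 2))⁻¹ := by
        rw [ENNReal.ofReal_inv_of_pos (by positivity), ENNReal.ofReal_pow dist_nonneg,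
          ← edist_dist, edist_comm]

theorem enorm_integral_regNewtonKernel_smul_le_eta {n : ℕ} (hn : 2 ≤ n) {a x₀ : Eu n} {r ε M : ℝ}
    {V : Eu n → ℝ} {f : Eu n → ℂ} (hx₀ : x₀ ∈ ball a r)
    (hf : ∀ y ∉ closedBall a r, f y = 0) (hfV : ∀ᵐ y, ‖f y‖ ≤ |V y| * M) :
    ‖∫ y, regNewtonKernel n x₀ ε y • f y‖ₑ ≤ eta n (2 * r) V * ENNReal.ofReal M := by
  have hball : closedBall a r ⊆ ball x₀ (2 * r) :=
    closedBall_subset_ball' (by rw [dist_comm]; linarith [mem_ball.1 hx₀])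
  -- makes `volume` atomless, for `Measure.ae_ne`
  have : Nonempty (Fin n) := ⟨⟨0, by omega⟩⟩
  calc ‖∫ y, regNewtonKernel n x₀ ε y • f y‖ₑ
      ≤ ∫⁻ y, ‖regNewtonKernel n x₀ ε y • f y‖ₑ := enorm_integral_le_lintegral_enorm _
    _ ≤ ∫⁻ y, (ball x₀ (2 * r)).indicator
          (fun y ↦ ‖V y‖ₑ / edist x₀ y ^ (n - 2) * ENNReal.ofReal M) y := by
        refine lintegral_mono_ae ?_
        filter_upwards [hfV, Measure.ae_ne volume x₀] with y hfy hy
        by_cases hyr : y ∈ closedBall a r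
        · have hfy' : ‖f y‖ₑ ≤ ‖V y‖ₑ * ENNReal.ofReal M := by
            rw [← ofReal_norm, Real.enorm_eq_ofReal_abs, ← ENNReal.ofReal_mul (abs_nonneg _)]
            exact ENNReal.ofReal_le_ofReal hfy
          rw [indicator_of_mem (hball hyr), enorm_smul, ENNReal.div_eq_inv_mul, mul_assoc]
          exact mul_le_mul' (enorm_regNewtonKernel_le hn hy ε) hfy'
        · simp [hf y hyr]
    _ = (∫⁻ y in ball x₀ (2 * r), ‖V y‖ₑ / edist x₀ y ^ (n - 2)) * ENNReal.ofReal M := by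
        rw [lintegral_indicator measurableSet_ball, lintegral_mul_const' _ _ ENNReal.ofReal_ne_top]
    _ ≤ eta n (2 * r) V * ENNReal.ofReal M := by
        gcongr
        exact le_iSup (fun x ↦ ∫⁻ y in ball x (2 * r), (‖V y‖₊ : ℝ≥0∞) / edist x y ^ (n - 2)) x₀

/-- Theorem 2: if `u ∈ W^{2,2}` is a nontrivial solution of `|Δu| ≤ |Vu|`
supported in `B(a,r)` and `1_{B(a,r)}V` is in the extended Kato class `K̃_n`, then there
are `C > 0` and `r₀ > 0`, `C` independent of `r`, with `η(2r,V) ≥ C` for all `r < r₀`. -/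
theorem minimal_support_kato (n : ℕ) (hn : 3 ≤ n) (a : Eu n) (V : Eu n → ℝ) :
    ∃ C : ℝ≥0∞, 0 < C ∧ ∃ r₀ : ℝ, 0 < r₀ ∧
      ∀ r : ℝ, 0 < r → r < r₀ →
        ∀ u : Eu n → ℂ, MemW22 u → u ≠ 0 →
          (∀ᵐ x ∂(volume : Measure (Eu n)), ‖lap u x‖ ≤ |V x| * ‖u x‖) →
          Function.support u ⊆ ball a r →
          (∀ ρ : ℝ, 0 < ρ → eta n ρ (Set.indicator (ball a r) V) ≠ ⊤) →
          C ≤ eta n (2 * r) V := by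
  refine ⟨ENNReal.ofReal (∫ w, newtonMollifier n w),
    ENNReal.ofReal_pos.2 (integral_newtonMollifier_pos hn), 1, one_pos, ?_⟩
  intro r _ _ u hu hu0 hV hsupp _
  have hts : tsupport u ⊆ closedBall a r :=
    closure_minimal (hsupp.trans ball_subset_closedBall) isClosed_closedBall
  have hus : HasCompactSupport u :=
    (isCompact_closedBall a r).of_isClosed_subset (isClosed_tsupport u) hts
  have hcont := hu.1.continuous
  obtain ⟨x₀, hmax⟩ := hcont.norm.exists_forall_ge_of_hasCompactSupport hus.norm
  have hux₀ : u x₀ ≠ 0 := by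
    obtain ⟨z, hz⟩ := Function.ne_iff.1 hu0
    exact norm_pos_iff.1 ((norm_pos_iff.2 hz).trans_le (hmax z))
  have hbound (c : ℝ) (hc : 0 < c) :
      ‖∫ y, (c ^ n * newtonMollifier n (c • (x₀ - y))) • u y‖ₑ ≤ eta n (2 * r) V * ‖u x₀‖ₑ := by
    have hgreen := integral_regNewtonKernel_smul_lap hu.1 hus x₀ (inv_pos.2 hc)
    rw [inv_inv] at hgreen
    rw [← enorm_neg, ← hgreen, ← ofReal_norm (u x₀)]
    exact enorm_integral_regNewtonKernel_smul_le_eta (by omega) (hsupp hux₀)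
      (fun y hy ↦ lap_eq_zero_of_notMem_tsupport fun h ↦ hy (hts h))
      (hV.mono fun y hy ↦ hy.trans (mul_le_mul_of_nonneg_left (hmax y) (abs_nonneg _)))
  have hlim := (tendsto_integral_newtonMollifier_smul hn
    (hcont.integrable_of_hasCompactSupport hus) (hcont.continuousAt (x := x₀))).enorm
  have hle := le_of_tendsto hlim ((eventually_gt_atTop 0).mono hbound)
  rwa [enorm_smul, Real.enorm_of_nonneg (integral_newtonMollifier_pos hn).le,
    ENNReal.mul_le_mul_iff_left (enorm_ne_zero.2 hux₀) enorm_ne_top] at hle
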